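/- Let p > 1 be real, m ≥ 1 an integer, and let χ : ℝ → [0,1] be a C^∞ function, nonincreasing, with χ(t) = 1 for t ≤ 1/2 and χ(t) = 0 for t ≥ 1. Set K = m·p/(p−1) and ψ(t) = χ(t)^K. Then ψ is m times continuously differentiable on ℝ and there exists a constant C > 0 such that for every integer j with 0 ≤ j ≤ m and every t ∈ ℝ, |ψ^{(j)}(t)| ≤ C · ψ(t)^{1/p}. -/

import Mathlib

/-!
Inductively, `ψ⁽ʲ⁾ = χ ^ (K - j) * g j`, where `g 0 = 1` and
`g (j + 1) = (K - j) χ' g j + χ (g j)'`; this needs `K - j ≥ 1` at each step, i.e. `m ≤ K`.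
Every `g j` is smooth, and for `j ≥ 1` it is supported where `χ' ≠ 0`, i.e. in `[1/2, 1]`,
so it is bounded. Since `0 ≤ χ ≤ 1` and `K - j ≥ K - m = K / p`, this gives
`|ψ⁽ʲ⁾| ≤ ‖g j‖∞ χ ^ (K / p) = ‖g j‖∞ ψ ^ (1 / p)`.
-/

open Real
open scoped ContDiff

lemma hasCompactSupport_deriv_of_const_off_Icc {E : Type*} [NormedAddCommGroup E]
    [NormedSpace ℝ E] {f : ℝ → E} {a b : ℝ} {c d : E}
    (hleft : ∀ t ≤ a, f t = c) (hright : ∀ t, b ≤ t → f t = d) :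
    HasCompactSupport (deriv f) := by
  refine HasCompactSupport.intro (isCompact_Icc (a := a) (b := b)) fun t ht => ?_
  rw [Set.mem_Icc, not_and_or, not_le, not_le] at ht
  rcases ht with ht | ht
  · have hc : f =ᶠ[nhds t] fun _ => c :=
      Filter.eventually_of_mem (Iio_mem_nhds ht) fun s hs => hleft s (le_of_lt hs)
    rw [hc.deriv_eq, deriv_const]
  · have hd : f =ᶠ[nhds t] fun _ => d :=
      Filter.eventually_of_mem (Ioi_mem_nhds ht) fun s hs => hright s (le_of_lt hs)
    rw [hd.deriv_eq, deriv_const]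

lemma deriv_rpow_mul {χ g : ℝ → ℝ} {α : ℝ} (hα : 1 ≤ α) (hχ0 : ∀ t, 0 ≤ χ t)
    (hχ : Differentiable ℝ χ) (hg : Differentiable ℝ g) :
    deriv (fun t => χ t ^ α * g t) =
      fun t => χ t ^ (α - 1) * (α * deriv χ t * g t + χ t * deriv g t) := by
  funext t
  have hpow : HasDerivAt (fun s => χ s ^ α) (α * χ t ^ (α - 1) * deriv χ t) t := by
    simpa [mul_assoc, Function.comp_def] using
      (hasDerivAt_rpow_const (Or.inr hα)).comp t (hχ t).hasDerivAt
  have hsplit : χ t ^ α = χ t ^ (α - 1) * χ t := by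
    rw [← rpow_add_one' (hχ0 t) (by linarith), sub_add_cancel]
  exact (hpow.mul (hg t).hasDerivAt).deriv.trans (by rw [hsplit]; ring)

noncomputable def rpowDerivFactor (χ : ℝ → ℝ) (K : ℝ) : ℕ → ℝ → ℝ
  | 0 => 1
  | j + 1 => fun t =>
      (K - j) * deriv χ t * rpowDerivFactor χ K j t + χ t * deriv (rpowDerivFactor χ K j) t

namespace rpowDerivFactor

variable {χ : ℝ → ℝ} (K : ℝ)

lemma contDiff (hχ : ContDiff ℝ ∞ χ) : ∀ j, ContDiff ℝ ∞ (rpowDerivFactor χ K j)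
  | 0 => contDiff_const
  | j + 1 =>
    have hg := contDiff hχ j
    ((contDiff_const.mul (contDiff_infty_iff_deriv.mp hχ).2).mul hg).add
      (hχ.mul (contDiff_infty_iff_deriv.mp hg).2)

lemma hasCompactSupport_succ (hχ' : HasCompactSupport (deriv χ)) (j : ℕ) :
    HasCompactSupport (rpowDerivFactor χ K (j + 1)) := by
  have step : ∀ i, HasCompactSupport (deriv (rpowDerivFactor χ K i)) →
      HasCompactSupport (rpowDerivFactor χ K (i + 1)) := fun i h =>
    (hχ'.mul_left (f := fun _ => K - i)).mul_right.add (h.mul_left (f := χ))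
  induction j with
  | zero => exact step 0 (by simpa [rpowDerivFactor] using HasCompactSupport.zero)
  | succ j ih => exact step (j + 1) ih.deriv

lemma exists_bound (hχ : ContDiff ℝ ∞ χ) (hχ' : HasCompactSupport (deriv χ)) :
    ∀ j, ∃ B, ∀ t, |rpowDerivFactor χ K j t| ≤ B
  | 0 => ⟨1, fun _ => by simp [rpowDerivFactor]⟩
  | j + 1 => ((contDiff K hχ (j + 1)).continuous.bounded_above_of_compact_support
      (hasCompactSupport_succ K hχ' j))

lemma exists_pos_bound_of_le (hχ : ContDiff ℝ ∞ χ) (hχ' : HasCompactSupport (deriv χ))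
    (m : ℕ) : ∃ C > 0, ∀ j ≤ m, ∀ t, |rpowDerivFactor χ K j t| ≤ C := by
  choose B hB using exists_bound K hχ hχ'
  obtain ⟨M, hM⟩ := ((Finset.range (m + 1)).image B).exists_le
  refine ⟨max M 1, by positivity, fun j hj t => ?_⟩
  have hBj : B j ≤ M := hM _ (Finset.mem_image_of_mem B (Finset.mem_range.mpr (by omega)))
  exact (hB j t).trans (hBj.trans (le_max_left _ _))

end rpowDerivFactor

lemma iteratedDeriv_rpow_eq {χ : ℝ → ℝ} {K : ℝ} (hχ : ContDiff ℝ ∞ χ) (hχ0 : ∀ t, 0 ≤ χ t) :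
    ∀ j : ℕ, (j : ℝ) ≤ K →
      iteratedDeriv j (fun t => χ t ^ K) = fun t => χ t ^ (K - j) * rpowDerivFactor χ K j t
  | 0, _ => by simp [rpowDerivFactor]
  | j + 1, hj => by
    push_cast at hj
    rw [iteratedDeriv_succ, iteratedDeriv_rpow_eq hχ hχ0 j (by linarith),
      deriv_rpow_mul (by linarith) hχ0 (hχ.differentiable (by simp))
        ((rpowDerivFactor.contDiff K hχ j).differentiable (by simp))]
    funext t
    simp only [rpowDerivFactor, Nat.cast_add, Nat.cast_one, sub_sub]

theorem stmt8 (p : ℝ) (hp : 1 < p) (m : ℕ)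
    (χ : ℝ → ℝ) (hχ : ContDiff ℝ ((⊤ : ℕ∞) : WithTop ℕ∞) χ)
    (hrange : ∀ t, χ t ∈ Set.Icc (0 : ℝ) 1)
    (hone : ∀ t ≤ (1 / 2 : ℝ), χ t = 1)
    (hzero : ∀ t, (1 : ℝ) ≤ t → χ t = 0) :
    ContDiff ℝ (m : WithTop ℕ∞) (fun t => χ t ^ ((m : ℝ) * p / (p - 1))) ∧
    ∃ C > (0 : ℝ), ∀ j : ℕ, j ≤ m → ∀ t : ℝ,
      |iteratedDeriv j (fun t => χ t ^ ((m : ℝ) * p / (p - 1))) t| ≤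
        C * (χ t ^ ((m : ℝ) * p / (p - 1))) ^ (1 / p) := by
  set K := (m : ℝ) * p / (p - 1)
  have hp1 : 0 < p - 1 := by linarith
  have hKp : K * (1 / p) = K - m := by simp only [K]; field_simp; ring
  have hmK : (m : ℝ) ≤ K := by
    rw [le_div_iff₀ hp1]; nlinarith [(Nat.cast_nonneg m : (0 : ℝ) ≤ m)]
  refine ⟨(hχ.of_le (by exact_mod_cast le_top)).rpow_const_of_le hmK, ?_⟩
  obtain ⟨C, hC0, hC⟩ := rpowDerivFactor.exists_pos_bound_of_le K hχ
    (hasCompactSupport_deriv_of_const_off_Icc hone hzero) m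
  refine ⟨C, hC0, fun j hj t => ?_⟩
  obtain ⟨hχ0, hχ1⟩ := hrange t
  have hjm : (j : ℝ) ≤ m := by exact_mod_cast hj
  rw [iteratedDeriv_rpow_eq hχ (fun s => (hrange s).1) j (by linarith), ← rpow_mul hχ0, hKp,
    abs_mul, abs_of_nonneg (rpow_nonneg hχ0 _), mul_comm C]
  exact mul_le_mul (rpow_le_rpow_of_exponent_ge' hχ0 hχ1 (by linarith) (by linarith))
    (hC j hj t) (abs_nonneg _) (rpow_nonneg hχ0 _)
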